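/- Let k be a positive integer, S_L = {1, 2, …, k}, and let S_R be a finite set of k positive integers that does not contain k consecutive integers. Then the partizan subtraction game (S_L, S_R) is strongly dominated by Left: there exists n₀ such that for all n ≥ n₀ the outcome of n is L. -/
import Mathlib


mutual
def LeftFirstWins (SL SR : Finset ℕ) : ℕ → Prop
  | n => ∃ s ∈ SL, ∃ (_ : 0 < s) (_ : s ≤ n), ¬ RightFirstWins SL SR (n - s)
  termination_by n => n
  decreasing_by omega
def RightFirstWins (SL SR : Finset ℕ) : ℕ → Prop
  | n => ∃ s ∈ SR, ∃ (_ : 0 < s) (_ : s ≤ n), ¬ LeftFirstWins SL SR (n - s)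
  termination_by n => n
  decreasing_by omega
end

inductive Outcome | P | L | R | N
deriving DecidableEq

open Classical in
noncomputable def outcome (SL SR : Finset ℕ) (n : ℕ) : Outcome :=
  if LeftFirstWins SL SR n then
    if RightFirstWins SL SR n then .N else .L
  else
    if RightFirstWins SL SR n then .R else .P

theorem stmt_12 (k : ℕ) (hk : 0 < k) (SR : Finset ℕ) (hpos : ∀ s ∈ SR, 0 < s)
    (hcard : SR.card = k) (hcons : ¬ ∃ m : ℕ, ∀ i < k, m + i ∈ SR) :
    ∃ n₀ : ℕ, ∀ n ≥ n₀, outcome (Finset.Icc 1 k) SR n = .L := by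
  have hrfw0 : ∀ SL : Finset ℕ, ¬ RightFirstWins SL SR 0 := by
    intro SL h
    rw [RightFirstWins] at h
    obtain ⟨s, _, hs, hsn, _⟩ := h
    omega
  -- every positive n is a Left-first win
  have hlfw : ∀ n, 1 ≤ n → LeftFirstWins (Finset.Icc 1 k) SR n := by
    intro n
    induction n using Nat.strong_induction_on with
    | _ n ih =>
      intro hn
      by_cases hnk : n ≤ k
      · rw [LeftFirstWins]
        exact ⟨n, Finset.mem_Icc.mpr ⟨hn, hnk⟩, hn, le_refl n, by
          simpa using hrfw0 (Finset.Icc 1 k)⟩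
      · by_contra hno
        rw [LeftFirstWins] at hno
        push_neg at hno
        -- for each i in 1..k, RightFirstWins (n - i), and hence n - i ∈ SR
        have hmem : ∀ i, 1 ≤ i → i ≤ k → (n - i) ∈ SR := by
          intro i h1 h2
          have hi : i ∈ Finset.Icc 1 k := Finset.mem_Icc.mpr ⟨h1, h2⟩
          have hr := hno i hi h1 (by omega)
          rw [RightFirstWins] at hr
          obtain ⟨t, htSR, htpos, htle, hlose⟩ := hr
          have : n - i - t = 0 := by
            by_contra h0
            exact hlose (ih (n - i - t) (by omega) (by omega))
          have : t = n - i := by omega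
          rwa [this] at htSR
        exact hcons ⟨n - k, fun i hi => by
          have := hmem (k - i) (by omega) (by omega)
          have he : n - (k - i) = n - k + i := by omega
          rwa [he] at this⟩
  have hrfw : ∀ n, n ∉ SR → ¬ RightFirstWins (Finset.Icc 1 k) SR n := by
    intro n hn h
    rw [RightFirstWins] at h
    obtain ⟨t, htSR, htpos, htle, hlose⟩ := h
    rcases Nat.eq_or_lt_of_le htle with he | hlt
    · exact hn (he ▸ htSR)
    · exact hlose (hlfw (n - t) (by omega))
  refine ⟨SR.sup id + 2, fun n hn => ?_⟩
  have h1 : n ∉ SR := fun h => by have := Finset.le_sup (f := id) h; simp at this; omega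
  have h2 : n - 1 ∉ SR := fun h => by have := Finset.le_sup (f := id) h; simp at this; omega
  have hL : LeftFirstWins (Finset.Icc 1 k) SR n := by
    rw [LeftFirstWins]
    exact ⟨1, Finset.mem_Icc.mpr ⟨le_refl 1, hk⟩, one_pos, by omega, hrfw (n - 1) h2⟩
  have hR : ¬ RightFirstWins (Finset.Icc 1 k) SR n := hrfw n h1
  simp [outcome, hL, hR]
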